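/- Let λ₁,…,λₙ be real numbers, not all zero, y₁,…,yₙ i.i.d. standard Gaussians, 0 < r < 1, ξ_r := ∑_{k=0}^∞ r^k/(k+2), and a > 0. Then P(∑ᵢ λᵢ(yᵢ² - 1) > a) ≤ exp(-min{a²/(8ξ_r·∑ᵢλᵢ²), r·a/(4·maxᵢ|λᵢ|)}). -/

import Mathlib

/-!
Chernoff's method. For a standard Gaussian `y`, `E exp (s (y² - 1)) = e^(-s) (1 - 2s)^(-1/2)`, whose
logarithm is `(-log (1 - x) - x) / 2 = (x² / 2) ξ_x` with `x = 2s`; for `|x| ≤ r` this is at most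
`(x² / 2) ξ_r`. Over the product measure the moment generating function of `∑ λᵢ (yᵢ² - 1)` factors,
so for `0 ≤ t ≤ r / (2 maxᵢ |λᵢ|)` it is at most `exp (2 ξ_r (∑ λᵢ²) t²)`, and the choice
`t = min (a / (4 ξ_r ∑ λᵢ²)) (r / (2 maxᵢ |λᵢ|))` in Chernoff's inequality gives the bound.
-/

open MeasureTheory ProbabilityTheory

noncomputable def xi (r : ℝ) : ℝ := ∑' k : ℕ, r ^ k / ((k : ℝ) + 2)

open Real Finset
open scoped NNReal ENNReal

lemma summable_pow_div_add_two {x : ℝ} (hx : |x| < 1) :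
    Summable fun k : ℕ => x ^ k / ((k : ℝ) + 2) := by
  refine .of_norm_bounded (summable_geometric_of_lt_one (abs_nonneg x) hx) fun k => ?_
  rw [norm_div, norm_pow, norm_eq_abs, norm_of_nonneg (by positivity)]
  exact div_le_self (by positivity) (by linarith)

lemma xi_pos {r : ℝ} (hr0 : 0 ≤ r) (hr1 : r < 1) : 0 < xi r := by
  have h0 := (summable_pow_div_add_two (x := r) (by rwa [abs_of_nonneg hr0])).le_tsum 0
    fun k _ => by positivity
  exact (by norm_num : (0 : ℝ) < 1 / 2).trans_le (by simpa [xi] using h0)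

lemma xi_le_xi {x r : ℝ} (hx : |x| ≤ r) (hr : r < 1) : xi x ≤ xi r := by
  have hr0 : 0 ≤ r := (abs_nonneg x).trans hx
  refine (summable_pow_div_add_two (hx.trans_lt hr)).tsum_le_tsum (fun k => ?_)
    (summable_pow_div_add_two (by rwa [abs_of_nonneg hr0]))
  refine div_le_div_of_nonneg_right ?_ (by positivity)
  exact (le_abs_self _).trans ((abs_pow x k).trans_le (pow_le_pow_left₀ (abs_nonneg x) hx k))

lemma sq_mul_xi {x : ℝ} (hx : |x| < 1) : x ^ 2 * xi x = -log (1 - x) - x := by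
  have hlog : HasSum (fun k : ℕ => x ^ (k + 1 + 1) / ((k : ℝ) + 1 + 1)) (-log (1 - x) - x) := by
    simpa using (hasSum_nat_add_iff' 1).mpr (Real.hasSum_pow_div_log_of_abs_lt_one hx)
  exact ((summable_pow_div_add_two hx).hasSum.mul_left (x ^ 2)).unique
    (hlog.congr_fun fun k => by ring)

lemma neg_log_one_sub_sub_le {x r : ℝ} (hx : |x| ≤ r) (hr : r < 1) :
    -log (1 - x) - x ≤ x ^ 2 * xi r := by
  rw [← sq_mul_xi (hx.trans_lt hr)]
  exact mul_le_mul_of_nonneg_left (xi_le_xi hx hr) (sq_nonneg x)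

-- No condition on `s`: for `2 v s ≥ 1` both sides are junk zeros (a non-integrable `mgf`,
-- and `√` of a nonpositive number).
lemma mgf_sq_gaussianReal (v : ℝ≥0) (s : ℝ) :
    mgf (fun x => x ^ 2) (gaussianReal 0 v) s = (√(1 - 2 * v * s))⁻¹ := by
  rcases eq_or_ne v 0 with rfl | hv
  · simp [mgf, gaussianReal_zero_var]
  rw [mgf, integral_gaussianReal_eq_integral_smul hv]
  have hpdf : ∀ x : ℝ, gaussianPDFReal 0 v x • exp (s * x ^ 2)
      = (√(2 * π * v))⁻¹ * exp (-((2 * v : ℝ)⁻¹ - s) * x ^ 2) := by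
    intro x
    rw [gaussianPDFReal_def, smul_eq_mul, mul_assoc, ← exp_add]
    congr 2
    field_simp
    ring
  simp_rw [hpdf]
  rw [integral_const_mul, integral_gaussian, ← sqrt_inv, ← sqrt_mul (by positivity), ← sqrt_inv]
  congr 1
  field_simp

lemma mgf_mul_sq_sub_one_gaussianReal (l t : ℝ) :
    mgf (fun x => l * (x ^ 2 - 1)) (gaussianReal 0 1) t
      = exp (-(t * l)) * (√(1 - 2 * (t * l)))⁻¹ := by
  have hfun : (fun x : ℝ => l * (x ^ 2 - 1)) = fun x => l * x ^ 2 + -l := by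
    funext x; ring
  rw [hfun, mgf_add_const, mgf_const_mul, mgf_sq_gaussianReal, mul_comm]
  push_cast
  ring_nf

lemma integrable_exp_mul_mul_sq_sub_one_gaussianReal {l t : ℝ} (h : 2 * (t * l) < 1) :
    Integrable (fun x => exp (t * (l * (x ^ 2 - 1)))) (gaussianReal 0 1) := by
  refine mgf_pos_iff.1 ?_
  rw [mgf_mul_sq_sub_one_gaussianReal]
  exact mul_pos (exp_pos _) (inv_pos.2 (sqrt_pos.2 (by linarith)))

lemma mgf_mul_sq_sub_one_gaussianReal_le {l t r : ℝ} (hr : r < 1) (h : |2 * (t * l)| ≤ r) :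
    mgf (fun x => l * (x ^ 2 - 1)) (gaussianReal 0 1) t ≤ exp (2 * (t * l) ^ 2 * xi r) := by
  have hpos : 0 < 1 - 2 * (t * l) := by linarith [le_abs_self (2 * (t * l))]
  have hsqrt : (√(1 - 2 * (t * l)))⁻¹ = exp (-log (1 - 2 * (t * l)) / 2) := by
    rw [neg_div, exp_neg, ← log_sqrt hpos.le, exp_log (sqrt_pos.2 hpos)]
  rw [mgf_mul_sq_sub_one_gaussianReal, hsqrt, ← exp_add, exp_le_exp]
  linarith [neg_log_one_sub_sub_le h hr]

section Pi

variable {ι : Type*} [Fintype ι] {E : ι → Type*} {mE : ∀ i, MeasurableSpace (E i)}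
  {μ : (i : ι) → Measure (E i)} [∀ i, SigmaFinite (μ i)]

lemma integrable_exp_mul_sum_pi {f : (i : ι) → E i → ℝ} {t : ℝ}
    (hf : ∀ i, Integrable (fun x => exp (t * f i x)) (μ i)) :
    Integrable (fun x => exp (t * ∑ i, f i (x i))) (Measure.pi μ) := by
  simp_rw [mul_sum, exp_sum]
  exact Integrable.fintype_prod_dep (f := fun i x => exp (t * f i x)) hf

lemma mgf_sum_pi (f : (i : ι) → E i → ℝ) (t : ℝ) :
    mgf (fun x => ∑ i, f i (x i)) (Measure.pi μ) t = ∏ i, mgf (f i) (μ i) t := by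
  simp_rw [mgf, mul_sum, exp_sum]
  exact integral_fintype_prod_eq_prod (fun i x => exp (t * f i x))

end Pi

lemma measure_lt_le_exp_neg_min_of_mgf_le {Ω : Type*} [MeasurableSpace Ω] {μ : Measure Ω}
    [IsFiniteMeasure μ] {X : Ω → ℝ} {v b a : ℝ} (hv : 0 < v) (hb : 0 < b) (ha : 0 ≤ a)
    (hint : ∀ t ∈ Set.Icc 0 b, Integrable (fun ω => exp (t * X ω)) μ)
    (hmgf : ∀ t ∈ Set.Icc 0 b, mgf X μ t ≤ exp (v * t ^ 2 / 2)) :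
    μ {ω | a < X ω} ≤ ENNReal.ofReal (exp (-min (a ^ 2 / (2 * v)) (b * a / 2))) := by
  set t := min (a / v) b
  have ht : t ∈ Set.Icc 0 b := ⟨le_min (by positivity) hb.le, min_le_right _ _⟩
  -- `t ≤ a / v` makes the quadratic term of the exponent at most half the linear one.
  have hquad : v * t ^ 2 / 2 ≤ t * a / 2 := by
    have := (le_div_iff₀' hv).1 (min_le_left (a / v) b)
    nlinarith [ht.1]
  have hmin : t * a / 2 = min (a ^ 2 / (2 * v)) (b * a / 2) := by
    rw [min_mul_of_nonneg _ _ ha, ← min_div_div_right zero_le_two]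
    congr 1
    field_simp
  calc μ {ω | a < X ω} ≤ μ {ω | a ≤ X ω} := measure_mono fun ω (hω : a < X ω) => hω.le
    _ = ENNReal.ofReal (μ.real {ω | a ≤ X ω}) := (ofReal_measureReal (measure_ne_top _ _)).symm
    _ ≤ ENNReal.ofReal (exp (-t * a) * exp (v * t ^ 2 / 2)) := by
      refine ENNReal.ofReal_le_ofReal ((measure_ge_le_exp_mul_mgf a ht.1 (hint t ht)).trans ?_)
      exact mul_le_mul_of_nonneg_left (hmgf t ht) (exp_pos _).le
    _ ≤ ENNReal.ofReal (exp (-min (a ^ 2 / (2 * v)) (b * a / 2))) := by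
      rw [← exp_add, ← hmin]
      gcongr
      linarith

section GaussianQuadraticForm

variable {ι : Type*} [Fintype ι] (lam : ι → ℝ) {t : ℝ}

lemma integrable_exp_mul_sum_mul_sq_sub_one (h : ∀ i, 2 * (t * lam i) < 1) :
    Integrable (fun y => exp (t * ∑ i, lam i * (y i ^ 2 - 1)))
      (Measure.pi fun _ : ι => gaussianReal 0 1) :=
  integrable_exp_mul_sum_pi fun i => integrable_exp_mul_mul_sq_sub_one_gaussianReal (h i)

lemma mgf_sum_mul_sq_sub_one_le {r : ℝ} (hr : r < 1) (h : ∀ i, |2 * (t * lam i)| ≤ r) :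
    mgf (fun y => ∑ i, lam i * (y i ^ 2 - 1)) (Measure.pi fun _ : ι => gaussianReal 0 1) t
      ≤ exp (4 * xi r * (∑ i, lam i ^ 2) * t ^ 2 / 2) := by
  rw [mgf_sum_pi fun i x => lam i * (x ^ 2 - 1)]
  calc ∏ i, mgf (fun x => lam i * (x ^ 2 - 1)) (gaussianReal 0 1) t
      ≤ ∏ i, exp (2 * (t * lam i) ^ 2 * xi r) :=
        prod_le_prod (fun i _ => mgf_nonneg) fun i _ => mgf_mul_sq_sub_one_gaussianReal_le hr (h i)
    _ = exp (4 * xi r * (∑ i, lam i ^ 2) * t ^ 2 / 2) := by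
      rw [← exp_sum, mul_sum, sum_mul, sum_div]
      exact congrArg exp (sum_congr rfl fun i _ => by ring)

end GaussianQuadraticForm

theorem tail_bound_one_sided (n : ℕ) (lam : Fin n → ℝ) (hlam : lam ≠ 0)
    (r : ℝ) (hr : r ∈ Set.Ioo (0 : ℝ) 1) (a : ℝ) (ha : 0 < a) :
    (Measure.pi fun _ : Fin n => gaussianReal 0 1)
        {y | a < ∑ i, lam i * ((y i) ^ 2 - 1)}
      ≤ ENNReal.ofReal
          (Real.exp (-min (a ^ 2 / (8 * xi r * ∑ i, lam i ^ 2))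
            (r * a / (4 * ⨆ i, |lam i|)))) := by
  obtain ⟨hr0, hr1⟩ := hr
  obtain ⟨j, hj⟩ := Function.ne_iff.1 hlam
  set M := ⨆ i, |lam i|
  have hle_M : ∀ i, |lam i| ≤ M := le_ciSup (Set.finite_range _).bddAbove
  have hM : 0 < M := (abs_pos.2 hj).trans_le (hle_M j)
  have hS : 0 < ∑ i, lam i ^ 2 :=
    sum_pos' (fun i _ => sq_nonneg _) ⟨j, mem_univ j, sq_pos_of_ne_zero hj⟩
  have hcoord : ∀ t ∈ Set.Icc 0 (r / (2 * M)), ∀ i, |2 * (t * lam i)| ≤ r := by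
    intro t ht i
    rw [abs_mul, abs_mul, abs_two, abs_of_nonneg ht.1]
    calc 2 * (t * |lam i|) ≤ 2 * (r / (2 * M) * M) := by gcongr; exacts [ht.2, hle_M i]
      _ = r := by field_simp
  have hv : 0 < 4 * xi r * ∑ i, lam i ^ 2 := by have := xi_pos hr0.le hr1; positivity
  refine (measure_lt_le_exp_neg_min_of_mgf_le hv (by positivity) ha.le
    (fun t ht => integrable_exp_mul_sum_mul_sq_sub_one lam fun i =>
      (le_abs_self _).trans_lt ((hcoord t ht i).trans_lt hr1))
    (fun t ht => mgf_sum_mul_sq_sub_one_le lam hr1 (hcoord t ht))).trans_eq ?_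
  congr 4 <;> ring
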